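/- Every submodule of a free right module over a free associative algebra (tensor algebra) k⟨X⟩ over a field k is itself a free module. -/

import Mathlib

/-!
Right modules over `k⟨X⟩` are left modules over `kᵐᵒᵖ[FreeMonoid X]` (reverse the words), so it
suffices to treat submodules `N` of free left modules `ι →₀ k[W]`, where `W` is a free monoid,
well-ordered by shortlex so that multiplication is strictly monotone on both sides.

Order the monomials `(w, i)` lexicographically, word first. Then the leading monomial of `s • f`
is `(U * w, i)` for the leading monomials `U` of `s` and `(w, i)` of `f`, so the leading monomials
of `N` are stable under left multiplication. Call one primitive if it is not a proper left
multiple of another. Equidivisibility of `W` (Levi's lemma) makes the decomposition of a leading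
monomial as `u * q` with `q` primitive unique. Choosing for each primitive `q` an element of `N`
with leading monomial `q` gives a basis of `N`: the chosen elements span by leading-term
reduction, a well-founded induction, and they are independent because in a nontrivial relation
the terms have pairwise distinct leading monomials.
-/

theorem Finsupp.support_max_sub_lt {α M : Type*} [LinearOrder α] [AddGroup M] {F G : α →₀ M}
    {p : α} (hF : F.support.max ≤ p) (hG : G.support.max ≤ p) (h : F p = G p) :
    (F - G).support.max < p := by
  classical
  refine lt_of_le_of_ne (Finset.max_le fun a ha => ?_) fun hmax => ?_
  · rcases Finset.mem_union.1 (Finsupp.support_sub ha) with ha | ha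
    exacts [(Finset.le_max ha).trans hF, (Finset.le_max ha).trans hG]
  · simpa [h] using Finsupp.mem_support_iff.1 (Finset.mem_of_max hmax)

theorem Finsupp.sum_ne_zero_of_injOn_support_max {α κ M : Type*} [LinearOrder α]
    [AddCommMonoid M] {s : Finset κ} (hs : s.Nonempty) {F : κ → α →₀ M}
    (hF : ∀ j ∈ s, F j ≠ 0)
    (hinj : Set.InjOn (fun j => (F j).support.max) s) : ∑ j ∈ s, F j ≠ 0 := by
  obtain ⟨j₀, hj₀, hmax⟩ := s.exists_max_image (fun j => (F j).support.max) hs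
  obtain ⟨p, hp⟩ := Finset.max_of_nonempty (Finsupp.support_nonempty_iff.2 (hF j₀ hj₀))
  have hvanish : ∀ j ∈ s, j ≠ j₀ → F j p = 0 := fun j hj hne => by
    have hlt : (F j).support.max < p :=
      lt_of_le_of_ne (hp ▸ hmax j hj) fun h => hne (hinj hj hj₀ (h.trans hp.symm))
    exact Finsupp.notMem_support_iff.1 fun hmem => (Finset.le_max hmem).not_gt hlt
  intro hsum
  have hp₀ := congrArg (· p) hsum
  simp only [Finsupp.finsetSum_apply, Finsupp.coe_zero, Pi.zero_apply,
    Finset.sum_eq_single_of_mem j₀ hj₀ hvanish] at hp₀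
  exact Finsupp.mem_support_iff.1 (Finset.mem_of_max hp) hp₀

theorem one_le_of_wellFoundedLT {W : Type*} [Monoid W] [LinearOrder W] [WellFoundedLT W]
    [MulLeftStrictMono W] (w : W) : 1 ≤ w := by
  by_contra! hw
  obtain ⟨n, hn⟩ := WellFounded.not_rel_apply_succ (r := (· < ·)) (fun n => w ^ n)
  exact hn (by simpa [pow_succ] using mul_lt_mul_right hw (w ^ n))

theorem toLex_mul_le_toLex_mul {W ι : Type*} [Monoid W] [LinearOrder W] [MulLeftStrictMono W]
    [MulRightStrictMono W] [Preorder ι] {u U w w₀ : W} {i i₀ : ι} (hu : u ≤ U)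
    (h : toLex (w, i) ≤ toLex (w₀, i₀)) : toLex (u * w, i) ≤ toLex (U * w₀, i₀) := by
  have := mulRightMono_of_mulRightStrictMono W
  rcases Prod.Lex.toLex_le_toLex.1 h with hw | ⟨rfl, hi⟩
  · exact Prod.Lex.toLex_le_toLex.2 (.inl (mul_lt_mul_of_le_of_lt hu hw))
  · rcases hu.lt_or_eq with hu | rfl
    exacts [Prod.Lex.toLex_le_toLex.2 (.inl (mul_lt_mul_left hu w)),
      Prod.Lex.toLex_le_toLex.2 (.inr ⟨rfl, hi⟩)]

/-- For free monoids this is Levi's lemma. -/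
def IsEquidivisible (M : Type*) [Mul M] : Prop :=
  ∀ a b c d : M, a * b = c * d → ∃ t, (c = a * t ∧ b = t * d) ∨ (a = c * t ∧ d = t * b)

section LeftPrimitives

variable {W ι : Type*} [Monoid W]

def leftPrimitives (L : Set (W × ι)) : Set (W × ι) :=
  {p | p ∈ L ∧ ∀ u w, p.1 = u * w → (w, p.2) ∈ L → u = 1}

theorem exists_mem_leftPrimitives [LinearOrder W] [WellFoundedLT W] [MulLeftStrictMono W]
    [MulRightStrictMono W] {L : Set (W × ι)} {p : W × ι} (hp : p ∈ L) :
    ∃ q ∈ leftPrimitives L, ∃ u, p = (u * q.1, q.2) := by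
  obtain ⟨w, i⟩ := p
  induction w using WellFoundedLT.induction with
  | _ w ih =>
    by_cases hprim : (w, i) ∈ leftPrimitives L
    · exact ⟨(w, i), hprim, 1, by simp⟩
    obtain ⟨u, w', rfl, hw', hu⟩ : ∃ u w', w = u * w' ∧ (w', i) ∈ L ∧ u ≠ 1 := by
      simpa [leftPrimitives, hp] using hprim
    have hlt : w' < u * w' := by
      simpa using mul_lt_mul_left (lt_of_le_of_ne (one_le_of_wellFoundedLT u) hu.symm) w'
    obtain ⟨q, hq, v, hv⟩ := ih w' hlt hw'
    exact ⟨q, hq, u * v, by simp_all [mul_assoc]⟩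

theorem eq_of_mul_eq_mul_of_mem_leftPrimitives (hW : IsEquidivisible W) {L : Set (W × ι)}
    {q q' : W × ι} (hq : q ∈ leftPrimitives L) (hq' : q' ∈ leftPrimitives L) {u u' : W}
    (h : u * q.1 = u' * q'.1) (hi : q.2 = q'.2) : q = q' := by
  obtain ⟨t, ⟨-, ht⟩ | ⟨-, ht⟩⟩ := hW _ _ _ _ h
  · obtain rfl : t = 1 := hq.2 t q'.1 ht (hi ▸ hq'.1)
    exact Prod.ext (by simpa using ht) hi
  · obtain rfl : t = 1 := hq'.2 t q.1 ht (hi ▸ hq.1)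
    exact Prod.ext (by simpa using ht.symm) hi

end LeftPrimitives

namespace MonoidAlgebra

variable {k W ι : Type*}

section Semiring

variable [Semiring k]

noncomputable def finsuppCoeffs : (ι →₀ MonoidAlgebra k W) ≃+ (W ×ₗ ι →₀ k) :=
  (Finsupp.mapRange.addEquiv coeffAddEquiv).trans <|
    Finsupp.curryAddEquiv.symm.trans <| Finsupp.domCongr ((Equiv.prodComm ι W).trans toLex)

@[simp]
theorem finsuppCoeffs_toLex (f : ι →₀ MonoidAlgebra k W) (w : W) (i : ι) :
    finsuppCoeffs f (toLex (w, i)) = (f i).coeff w := by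
  simp [finsuppCoeffs]

variable [LinearOrder W] [LinearOrder ι]

noncomputable def leadingMonomial (f : ι →₀ MonoidAlgebra k W) : WithBot (W ×ₗ ι) :=
  (finsuppCoeffs f).support.max

theorem leadingMonomial_eq_bot_iff {f : ι →₀ MonoidAlgebra k W} :
    leadingMonomial f = ⊥ ↔ f = 0 := by
  simp [leadingMonomial, Finset.max_eq_bot]

theorem le_leadingMonomial {f : ι →₀ MonoidAlgebra k W} {w : W} {i : ι}
    (h : (f i).coeff w ≠ 0) : ↑(toLex (w, i)) ≤ leadingMonomial f :=
  Finset.le_max (by simpa using h)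

variable [Monoid W] [MulLeftStrictMono W] [MulRightStrictMono W]

theorem leadingMonomial_smul_le {s : MonoidAlgebra k W} {f : ι →₀ MonoidAlgebra k W}
    {U w₀ : W} {i₀ : ι} (hs : ∀ u ∈ s.coeff.support, u ≤ U)
    (hf : leadingMonomial f ≤ toLex (w₀, i₀)) :
    leadingMonomial (s • f) ≤ toLex (U * w₀, i₀) := by
  classical
  refine Finset.max_le fun p hp => ?_
  obtain ⟨⟨w, i⟩, rfl⟩ := toLex.surjective p
  have hw : w ∈ (s * f i).coeff.support := by simpa using hp
  obtain ⟨u, hu, v, hv, rfl⟩ := Finset.mem_mul.1 (support_coeff_mul_subset s (f i) hw)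
  have hvi := WithBot.coe_le_coe.1 ((le_leadingMonomial (Finsupp.mem_support_iff.1 hv)).trans hf)
  exact WithBot.coe_le_coe.2 (toLex_mul_le_toLex_mul (hs u hu) hvi)

theorem finsuppCoeffs_smul_toLex_mul {s : MonoidAlgebra k W} {f : ι →₀ MonoidAlgebra k W}
    {U w₀ : W} {i₀ : ι} (hs : ∀ u ∈ s.coeff.support, u ≤ U)
    (hf : leadingMonomial f ≤ toLex (w₀, i₀)) :
    finsuppCoeffs (s • f) (toLex (U * w₀, i₀)) =
      s.coeff U * finsuppCoeffs f (toLex (w₀, i₀)) := by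
  simp only [finsuppCoeffs_toLex, Finsupp.smul_apply, smul_eq_mul]
  refine coeff_mul_mul_of_uniqueMul fun u v hu hv huv =>
    (mul_eq_mul_iff_eq_and_eq (hs u hu) ?_).1 huv
  have hvi := WithBot.coe_le_coe.1 ((le_leadingMonomial (Finsupp.mem_support_iff.1 hv)).trans hf)
  exact (Prod.Lex.toLex_le_toLex.1 hvi).elim le_of_lt fun h => h.1.le

theorem leadingMonomial_smul [NoZeroDivisors k] {s : MonoidAlgebra k W}
    {f : ι →₀ MonoidAlgebra k W} {U w₀ : W} {i₀ : ι} (hs : s.coeff.support.max = U)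
    (hf : leadingMonomial f = toLex (w₀, i₀)) :
    leadingMonomial (s • f) = toLex (U * w₀, i₀) := by
  have hs' : ∀ u ∈ s.coeff.support, u ≤ U := fun u hu =>
    WithBot.coe_le_coe.1 (hs ▸ Finset.le_max hu)
  refine le_antisymm (leadingMonomial_smul_le hs' hf.le) (Finset.le_max ?_)
  rw [Finsupp.mem_support_iff, finsuppCoeffs_smul_toLex_mul hs' hf.le]
  exact mul_ne_zero (Finsupp.mem_support_iff.1 (Finset.mem_of_max hs))
    (Finsupp.mem_support_iff.1 (Finset.mem_of_max hf))

end Semiring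

section Ring

variable [Ring k] [NoZeroDivisors k] [Monoid W] [LinearOrder W] [MulLeftStrictMono W]
  [MulRightStrictMono W] [LinearOrder ι]

theorem linearIndependent_of_leadingMonomial {κ : Type*}
    (g : κ → ι →₀ MonoidAlgebra k W) (m : κ → W × ι)
    (hg : ∀ j, leadingMonomial (g j) = toLex (m j))
    (hm : ∀ j j' u u', u * (m j).1 = u' * (m j').1 → (m j).2 = (m j').2 → j = j') :
    LinearIndependent (MonoidAlgebra k W) g := by
  classical
  rw [linearIndependent_iff]
  intro l hl
  by_contra hl0
  have hU : ∀ j ∈ l.support, ∃ U : W, (l j).coeff.support.max = U := fun j hj =>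
    Finset.max_of_nonempty (Finsupp.support_nonempty_iff.2 fun h0 =>
      Finsupp.mem_support_iff.1 hj (coeff_injective (h0.trans coeff_zero.symm)))
  choose! U hU using hU
  have hlm : ∀ j ∈ l.support, leadingMonomial (l j • g j) = toLex (U j * (m j).1, (m j).2) :=
    fun j hj => leadingMonomial_smul (hU j hj) (hg j)
  refine Finsupp.sum_ne_zero_of_injOn_support_max (F := fun j => finsuppCoeffs (l j • g j))
    (Finsupp.support_nonempty_iff.2 hl0) (fun j hj h0 => ?_) (fun j hj j' hj' h => ?_) ?_
  · simpa [leadingMonomial, h0] using hlm j hj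
  · have hjj' := (hlm j hj).symm.trans (h.trans (hlm j' hj'))
    simp only [WithBot.coe_inj, toLex_inj, Prod.mk.injEq] at hjj'
    exact hm j j' _ _ hjj'.1 hjj'.2
  · rw [Finsupp.linearCombination_apply, Finsupp.sum] at hl
    rw [← map_sum, hl, map_zero]

end Ring

section DivisionRing

variable [DivisionRing k] [Monoid W] [LinearOrder W] [MulLeftStrictMono W]
  [MulRightStrictMono W] [LinearOrder ι]

theorem exists_leadingMonomial_sub_single_smul_lt {v g : ι →₀ MonoidAlgebra k W} {u w : W}
    {i : ι} (hv : leadingMonomial v = toLex (u * w, i)) (hg : leadingMonomial g = toLex (w, i)) :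
    ∃ e : k, leadingMonomial (v - single u e • g) < toLex (u * w, i) := by
  have hc : finsuppCoeffs g (toLex (w, i)) ≠ 0 :=
    Finsupp.mem_support_iff.1 (Finset.mem_of_max hg)
  have hu (e : k) : ∀ x ∈ (single u e).coeff.support, x ≤ u := fun x hx => by
    rw [coeff_single] at hx
    exact (Finset.mem_singleton.1 (Finsupp.support_single_subset hx)).le
  refine ⟨finsuppCoeffs v (toLex (u * w, i)) * (finsuppCoeffs g (toLex (w, i)))⁻¹, ?_⟩
  rw [leadingMonomial, map_sub]
  refine Finsupp.support_max_sub_lt hv.le (leadingMonomial_smul_le (hu _) hg.le) ?_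
  rw [finsuppCoeffs_smul_toLex_mul (hu _) hg.le, coeff_single, Finsupp.single_eq_same,
    inv_mul_cancel_right₀ hc]

def leadingMonomials (N : Submodule (MonoidAlgebra k W) (ι →₀ MonoidAlgebra k W)) :
    Set (W × ι) :=
  {p | ∃ v ∈ N, leadingMonomial v = toLex p}

theorem span_eq_of_leadingMonomial [WellFoundedLT W] [WellFoundedLT ι]
    {N : Submodule (MonoidAlgebra k W) (ι →₀ MonoidAlgebra k W)}
    {g : leftPrimitives (leadingMonomials N) → ι →₀ MonoidAlgebra k W} (hgN : ∀ q, g q ∈ N)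
    (hg : ∀ q, leadingMonomial (g q) = toLex q.1) :
    Submodule.span (MonoidAlgebra k W) (Set.range g) = N := by
  refine le_antisymm (Submodule.span_le.2 (Set.range_subset_iff.2 hgN)) fun v hv => ?_
  suffices h : ∀ m, ∀ v ∈ N, leadingMonomial v = m → v ∈ Submodule.span _ (Set.range g) from
    h _ v hv rfl
  intro m
  induction m using WellFoundedLT.induction with
  | _ m ih =>
    rintro v hv rfl
    rcases eq_or_ne v 0 with rfl | hv0
    · exact zero_mem _
    obtain ⟨p, hp⟩ := WithBot.ne_bot_iff_exists.1 (leadingMonomial_eq_bot_iff.not.2 hv0)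
    obtain ⟨q, hq, u, hpq⟩ :=
      exists_mem_leftPrimitives (L := leadingMonomials N) (p := ofLex p) ⟨v, hv, hp.symm⟩
    have hvq : leadingMonomial v = toLex (u * q.1, q.2) := by rw [← hpq]; exact hp.symm
    obtain ⟨e, he⟩ := exists_leadingMonomial_sub_single_smul_lt hvq (hg ⟨q, hq⟩)
    have hsub := ih _ (hvq ▸ he) _ (N.sub_mem hv (N.smul_mem _ (hgN _))) rfl
    have hgq : g ⟨q, hq⟩ ∈ Submodule.span (MonoidAlgebra k W) (Set.range g) :=
      Submodule.subset_span ⟨_, rfl⟩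
    simpa using add_mem hsub (Submodule.smul_mem _ (single u e) hgq)

theorem submodule_finsupp_free [WellFoundedLT W] [WellFoundedLT ι] (hW : IsEquidivisible W)
    (N : Submodule (MonoidAlgebra k W) (ι →₀ MonoidAlgebra k W)) :
    Module.Free (MonoidAlgebra k W) N := by
  choose g hgN hg using fun q : leftPrimitives (leadingMonomials N) => q.2.1
  have hli : LinearIndependent (MonoidAlgebra k W) g :=
    linearIndependent_of_leadingMonomial g (fun q => q.1) hg fun q q' _ _ h hi =>
      Subtype.ext (eq_of_mul_eq_mul_of_mem_leftPrimitives hW q.2 q'.2 h hi)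
  exact .of_basis ((Module.Basis.span hli).map (.ofEq _ _ (span_eq_of_leadingMonomial hgN hg)))

end DivisionRing

end MonoidAlgebra

theorem List.Lex.append_same_right {α : Type*} {r : α → α → Prop} {l₁ l₂ : List α}
    (h : List.Lex r l₁ l₂) (hlen : l₁.length = l₂.length) (t : List α) :
    List.Lex r (l₁ ++ t) (l₂ ++ t) := by
  induction h with
  | nil => simp at hlen
  | cons _ ih => exact .cons (ih (by simpa using hlen))
  | rel h => exact .rel h

theorem List.Shortlex.append_same_right {α : Type*} {r : α → α → Prop} {s₁ s₂ : List α}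
    (h : List.Shortlex r s₁ s₂) (t : List α) : List.Shortlex r (s₁ ++ t) (s₂ ++ t) := by
  rcases List.shortlex_def.1 h with hlen | ⟨hlen, hlex⟩
  · exact .of_length_lt (by simpa using hlen)
  · exact .of_lex (by simp [hlen]) (hlex.append_same_right hlen t)

namespace FreeMonoid

variable (α : Type*)

theorem isEquidivisible : IsEquidivisible (FreeMonoid α) := fun a b c d h => by
  rcases List.append_eq_append_iff.1 (congrArg toList h) with ⟨t, hc, hb⟩ | ⟨t, ha, hd⟩
  exacts [⟨ofList t, .inl ⟨hc, hb⟩⟩, ⟨ofList t, .inr ⟨ha, hd⟩⟩]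

def reverseMulEquiv : FreeMonoid α ≃* (FreeMonoid α)ᵐᵒᵖ where
  toFun w := .op w.reverse
  invFun w := w.unop.reverse
  left_inv _ := reverse_reverse
  right_inv _ := by simp [reverse_reverse]
  map_mul' _ _ := by simp [reverse_mul]

abbrev shortlexOrder [LinearOrder α] : LinearOrder (FreeMonoid α) :=
  LinearOrder.lift' (fun w => toLex (w.length, w.toList)) fun _ _ h =>
    toList.injective (congrArg (fun p => (ofLex p).2) h)

section Shortlex

attribute [local instance] shortlexOrder

variable {α} [LinearOrder α]

theorem shortlex_lt_iff {u v : FreeMonoid α} :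
    u < v ↔ List.Shortlex (· < ·) u.toList v.toList :=
  Prod.Lex.toLex_lt_toLex.trans (by rw [List.shortlex_def, ← List.lt_iff_lex_lt]; rfl)

theorem shortlex_wellFoundedLT [WellFoundedLT α] : WellFoundedLT (FreeMonoid α) :=
  ⟨Subrelation.wf shortlex_lt_iff.1 (InvImage.wf toList (List.Shortlex.wf wellFounded_lt))⟩

theorem shortlex_mulLeftStrictMono : MulLeftStrictMono (FreeMonoid α) :=
  ⟨fun a _ _ h => shortlex_lt_iff.2 (by simpa using (shortlex_lt_iff.1 h).append_left a.toList)⟩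

theorem shortlex_mulRightStrictMono : MulRightStrictMono (FreeMonoid α) :=
  ⟨fun a _ _ h =>
    shortlex_lt_iff.2 (by simpa using (shortlex_lt_iff.1 h).append_same_right a.toList)⟩

end Shortlex

theorem submodule_finsupp_free (k ι : Type*) [DivisionRing k]
    (N : Submodule (MonoidAlgebra k (FreeMonoid α)) (ι →₀ MonoidAlgebra k (FreeMonoid α))) :
    Module.Free (MonoidAlgebra k (FreeMonoid α)) N := by
  obtain ⟨_, _⟩ := exists_wellFoundedLT α
  obtain ⟨_, _⟩ := exists_wellFoundedLT ι
  let := shortlexOrder α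
  have := shortlex_wellFoundedLT (α := α)
  have := shortlex_mulLeftStrictMono (α := α)
  have := shortlex_mulRightStrictMono (α := α)
  exact MonoidAlgebra.submodule_finsupp_free (isEquidivisible α) N

end FreeMonoid

noncomputable def FreeAlgebra.opRingEquivMonoidAlgebra (k X : Type*) [CommSemiring k] :
    (FreeAlgebra k X)ᵐᵒᵖ ≃+* MonoidAlgebra kᵐᵒᵖ (FreeMonoid X) :=
  (RingEquiv.op (FreeAlgebra.equivMonoidAlgebraFreeMonoid (R := k) (X := X)).toRingEquiv).trans <|
    MonoidAlgebra.opRingEquiv.trans <|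
      MonoidAlgebra.mapDomainRingEquiv kᵐᵒᵖ (FreeMonoid.reverseMulEquiv X).symm

/-- Every submodule of a free right module over the free associative algebra
`k⟨X⟩` is free. -/
theorem submodule_free_over_freeAlgebra
    (k : Type*) [Field k] (X : Type*)
    (M : Type*) [AddCommGroup M] [Module (FreeAlgebra k X)ᵐᵒᵖ M]
    [Module.Free (FreeAlgebra k X)ᵐᵒᵖ M]
    (N : Submodule (FreeAlgebra k X)ᵐᵒᵖ M) :
    Module.Free (FreeAlgebra k X)ᵐᵒᵖ N := by
  let E := FreeAlgebra.opRingEquivMonoidAlgebra k X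
  have := RingHomInvPair.of_ringEquiv E
  have := RingHomInvPair.of_ringEquiv_symm E
  let e := (Module.Free.chooseBasis (FreeAlgebra k X)ᵐᵒᵖ M).repr.trans
    (Finsupp.mapRange.linearEquiv E.toSemilinearEquiv)
  have := FreeMonoid.submodule_finsupp_free X kᵐᵒᵖ _ (N.map e.toLinearMap)
  exact .of_equiv (e.submoduleMap N).symm
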